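/- arXiv:2105.10625 — 2 statements merged into one kernel-verified Lean document; each statement's English description precedes it below -/
import Mathlib

section
/- Let (Ω, P) be a probability space, let T ≥ 1 and d_max ≥ 1 be integers, and for each t ∈ {1, …, T} let A_t : Ω → {0,1} and D_t : Ω → ℕ be random variables such that: (i) each D_t takes values in {1, …, d_max}; (ii) the D_t are identically distributed with common mean d = E[D_t] (so d ≥ 1); (iii) for each t, the random variables A_t and D_t are independent; and (iv) almost surely, for every t ∈ {1, …, T}, A_ت + Σ_{t' < t} A_{t'} · 1{D_{t'} > t − t'} ≤ 1 (an arm played at time t' blocks any play during the next D_{t'} − 1 rounds). Then (1/T) · Σ_{t=1}^{T} E[A_t] ≤ 1/d + d_max/T. -/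
/-!
Charge each play at round `t` for the `D t` consecutive rounds `t, …, t + D t - 1` it blocks.
The blocking constraint says that every round is charged at most once (rounds `s ≥ T` are
charged only by plays that also charge round `T - 1`), so pathwise `∑ A t * D t ≤ T + d_max`.
Taking expectations, independence of `A t` and `D t` gives `d * ∑ E[A t] ≤ T + d_max`.
-/

open MeasureTheory ProbabilityTheory Finset

section Blocking

variable {a : ℕ → ℝ} {D : ℕ → ℕ} {T : ℕ}

lemma sum_ite_mem_Ico_le_one_of_blocking (hT : 1 ≤ T) (ha : ∀ t, 0 ≤ a t) (hD : ∀ t, 1 ≤ D t)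
    (hblock : ∀ t, t < T → a t + ∑ t' ∈ range t, a t' * (if t - t' < D t' then 1 else 0) ≤ 1)
    (s : ℕ) : ∑ t ∈ range T, (if s ∈ Ico t (t + D t) then a t else 0) ≤ 1 := by
  set r := min s (T - 1)
  calc ∑ t ∈ range T, (if s ∈ Ico t (t + D t) then a t else 0)
      = ∑ t ∈ (range T).filter (fun t => s ∈ Ico t (t + D t)), a t := (sum_filter _ _).symm
    _ ≤ ∑ t ∈ (range (r + 1)).filter (fun t => r - t < D t), a t := by
        refine sum_le_sum_of_subset_of_nonneg (fun t => ?_) fun t _ _ => ha t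
        simp only [mem_filter, mem_range, mem_Ico]
        omega
    _ = a r + ∑ t' ∈ range r, a t' * (if r - t' < D t' then 1 else 0) := by
        rw [sum_filter, sum_range_succ, add_comm, Nat.sub_self, if_pos (show 0 < D r from hD r)]
        simp only [mul_ite, mul_one, mul_zero]
    _ ≤ 1 := hblock r (by omega)

lemma sum_mul_le_add_of_blocking {dmax : ℕ} (hT : 1 ≤ T) (ha : ∀ t, 0 ≤ a t)
    (hD : ∀ t, 1 ≤ D t ∧ D t ≤ dmax)
    (hblock : ∀ t, t < T → a t + ∑ t' ∈ range t, a t' * (if t - t' < D t' then 1 else 0) ≤ 1) :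
    ∑ t ∈ range T, a t * D t ≤ T + dmax := by
  calc ∑ t ∈ range T, a t * D t
      = ∑ t ∈ range T, ∑ s ∈ range (T + dmax), (if s ∈ Ico t (t + D t) then a t else 0) := by
        refine sum_congr rfl fun t ht => ?_
        have hsub : Ico t (t + D t) ⊆ range (T + dmax) := fun s hs => by
          simp only [mem_Ico, mem_range] at hs ht ⊢
          have := (hD t).2
          omega
        rw [sum_ite_mem, inter_eq_right.2 hsub, sum_const, Nat.card_Ico, nsmul_eq_mul, mul_comm]
        simp
    _ = ∑ s ∈ range (T + dmax), ∑ t ∈ range T, (if s ∈ Ico t (t + D t) then a t else 0) :=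
        sum_comm
    _ ≤ ∑ s ∈ range (T + dmax), 1 :=
        sum_le_sum fun s _ => sum_ite_mem_Ico_le_one_of_blocking hT ha (fun t => (hD t).1) hblock s
    _ = T + dmax := by simp

end Blocking

lemma one_div_mul_le_of_mul_le {S d T m : ℝ} (hT : 0 < T) (hd : 1 ≤ d) (hm : 0 ≤ m)
    (h : d * S ≤ T + m) : 1 / T * S ≤ 1 / d + m / T := by
  have hS : S ≤ T / d + m := by
    rw [div_add' _ _ _ (by positivity), le_div_iff₀ (by positivity)]
    nlinarith
  rw [one_div_mul_eq_div, div_le_iff₀ hT, add_mul, div_mul_cancel₀ _ hT.ne', one_div_mul_eq_div]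
  exact hS

theorem stmt1_general {Ω : Type*} [MeasurableSpace Ω] (P : Measure Ω) [IsProbabilityMeasure P]
    (T dmax : ℕ) (hT : 1 ≤ T)
    (A : ℕ → Ω → ℝ) (D : ℕ → Ω → ℕ)
    (hAmeas : ∀ t, Measurable (A t)) (hDmeas : ∀ t, Measurable (D t))
    (hA01 : ∀ t ω, A t ω = 0 ∨ A t ω = 1)
    (hDrange : ∀ t ω, 1 ≤ D t ω ∧ D t ω ≤ dmax)
    (d : ℝ) (hd : ∀ t, t < T → ∫ ω, (D t ω : ℝ) ∂P = d)
    (hindep : ∀ t, t < T → IndepFun (A t) (D t) P)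
    (hblock : ∀ᵐ ω ∂P, ∀ t, t < T →
      A t ω + ∑ t' ∈ Finset.range t, A t' ω * (if t - t' < D t' ω then 1 else 0) ≤ 1) :
    (1 / T : ℝ) * ∑ t ∈ Finset.range T, ∫ ω, A t ω ∂P ≤ 1 / d + dmax / T := by
  have hA : ∀ t ω, 0 ≤ A t ω ∧ A t ω ≤ 1 := fun t ω => by
    rcases hA01 t ω with h | h <;> simp [h]
  have hDint : ∀ t, Integrable (fun ω => (D t ω : ℝ)) P := fun t =>
    .of_bound (measurable_from_nat.comp (hDmeas t)).aestronglyMeasurable dmax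
      (ae_of_all _ fun ω => by simpa using (hDrange t ω).2)
  have hd1 : 1 ≤ d := by
    rw [← hd 0 hT]
    calc (1 : ℝ) = ∫ _, 1 ∂P := by simp
      _ ≤ _ := integral_mono (integrable_const 1) (hDint 0) fun ω => by
          simpa using (hDrange 0 ω).1
  have hADint : ∀ t, Integrable (fun ω => A t ω * D t ω) P := fun t =>
    (hDint t).bdd_mul (hAmeas t).aestronglyMeasurable (c := 1) (ae_of_all _ fun ω => by
      simpa [abs_of_nonneg (hA t ω).1] using (hA t ω).2)
  have hexp : ∀ t ∈ range T, ∫ ω, A t ω * D t ω ∂P = d * ∫ ω, A t ω ∂P := by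
    intro t ht
    rw [mem_range] at ht
    rw [mul_comm d, ← hd t ht]
    exact ((hindep t ht).comp measurable_id measurable_from_nat).integral_mul_eq_mul_integral
      (hAmeas t).aestronglyMeasurable (hDint t).aestronglyMeasurable
  have hpath : ∀ᵐ ω ∂P, ∑ t ∈ range T, A t ω * D t ω ≤ T + dmax :=
    hblock.mono fun ω => sum_mul_le_add_of_blocking hT (fun t => (hA t ω).1) (hDrange · ω)
  refine one_div_mul_le_of_mul_le (by exact_mod_cast hT) hd1 dmax.cast_nonneg ?_
  calc d * ∑ t ∈ range T, ∫ ω, A t ω ∂P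
      = ∫ ω, ∑ t ∈ range T, A t ω * D t ω ∂P := by
        rw [mul_sum, integral_finsetSum _ fun t _ => hADint t, sum_congr rfl hexp]
    _ ≤ ∫ _, (T + dmax : ℝ) ∂P :=
        integral_mono_ae (integrable_finsetSum _ fun t _ => hADint t) (integrable_const _) hpath
    _ = T + dmax := by simp

/-- **Lemma (stochastic pulling rate).** If a single arm with i.i.d. delays `D t ∈ {1,…,d_max}`
of mean `d` is played according to `A t ∈ {0,1}`, where `A t` and `D t` are independent
(the algorithm is not a priori aware of delay realizations) and the blocking constraint
`A t + Σ_{t'<t} A t' · 1{D t' > t - t'} ≤ 1` holds almost surely, then the expected pulling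
rate satisfies `(1/T) Σ_t E[A t] ≤ 1/d + d_max/T`. -/
theorem stmt1 {Ω : Type*} [MeasurableSpace Ω] (P : Measure Ω) [IsProbabilityMeasure P]
    (T dmax : ℕ) (hT : 1 ≤ T) (hdmax : 1 ≤ dmax)
    (A : ℕ → Ω → ℝ) (D : ℕ → Ω → ℕ)
    (hAmeas : ∀ t, Measurable (A t)) (hDmeas : ∀ t, Measurable (D t))
    (hA01 : ∀ t ω, A t ω = 0 ∨ A t ω = 1)
    (hDrange : ∀ t ω, 1 ≤ D t ω ∧ D t ω ≤ dmax)
    (hident : ∀ t t', t < T → t' < T → IdentDistrib (D t) (D t') P P)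
    (d : ℝ) (hd : ∀ t, t < T → ∫ ω, (D t ω : ℝ) ∂P = d)
    (hindep : ∀ t, t < T → IndepFun (A t) (D t) P)
    (hblock : ∀ᵐ ω ∂P, ∀ t, t < T →
      A t ω + ∑ t' ∈ Finset.range t, A t' ω * (if t - t' < D t' ω then 1 else 0) ≤ 1) :
    (1 / T : ℝ) * ∑ t ∈ Finset.range T, ∫ ω, A t ω ∂P ≤ 1 / d + dmax / T :=
  stmt1_general P T dmax hT A D hAmeas hDmeas hA01 hDrange d hd hindep hblock
end

section
/- Let (Ω, P) be a probability space and k ≥ 1 an integer. For each i ∈ {1, …, k}, let (X_{i,j})_{j ≥ 1} be an i.i.d. sequence of random variables taking values in [0,1] with mean μ_i (sequences corresponding to different i need not be independent of each other). For s ≥ 1 let μ̂_{i,s} = (1/s) Σ_{j=1}^{s} X_{i,j} denote the empirical mean of the first s samples of arm i. Then for every integer t ≥ 2, P( ∃ i ∈ {1, …, k}, ∃ s ∈ {1, …, t−1} : |μ̂_{i,s} − μ_i| ≥ √(3 ln(t) / (2s)) ) ≤ 2k / t². -/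
/-!
Hoeffding's inequality bounds the probability that the mean of the first `s` samples of an arm
deviates by at least `ε` by `2 exp (-2 s ε²)`, which is `2 / t³` for the radius
`ε = √(3 ln t / (2 s))`. A union bound over the `k` arms and the `t - 1` sample counts gives
`2 k (t - 1) / t³ ≤ 2 k / t²`.
-/

open MeasureTheory ProbabilityTheory Real Finset
open scoped NNReal

section Hoeffding

variable {Ω : Type*} [MeasurableSpace Ω] {μ : Measure Ω}

lemma ProbabilityTheory.HasSubgaussianMGF.measureReal_abs_ge_le {X : Ω → ℝ} {c : ℝ≥0}
    (h : HasSubgaussianMGF X c μ) {ε : ℝ} (hε : 0 ≤ ε) :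
    μ.real {ω | ε ≤ |X ω|} ≤ 2 * exp (-ε ^ 2 / (2 * c)) := by
  have hsplit : {ω | ε ≤ |X ω|} = {ω | ε ≤ X ω} ∪ {ω | ε ≤ (-X) ω} := by
    ext ω
    simp [le_abs]
  calc μ.real {ω | ε ≤ |X ω|} ≤ μ.real {ω | ε ≤ X ω} + μ.real {ω | ε ≤ (-X) ω} :=
        hsplit ▸ measureReal_union_le _ _
    _ ≤ exp (-ε ^ 2 / (2 * c)) + exp (-ε ^ 2 / (2 * c)) :=
        add_le_add (h.measure_ge_le hε) (h.neg.measure_ge_le hε)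
    _ = 2 * exp (-ε ^ 2 / (2 * c)) := by ring

variable [IsProbabilityMeasure μ] {Y : ℕ → Ω → ℝ} {a b m : ℝ}

lemma measureReal_abs_sum_sub_ge_le (hmeas : ∀ j, Measurable (Y j)) (hindep : iIndepFun Y μ)
    (hrange : ∀ j ω, Y j ω ∈ Set.Icc a b) (hmean : ∀ j, μ[Y j] = m) (n : ℕ) {ε : ℝ}
    (hε : 0 ≤ ε) :
    μ.real {ω | ε ≤ |∑ j ∈ range n, (Y j ω - m)|} ≤
      2 * exp (-2 * ε ^ 2 / (n * (b - a) ^ 2)) := by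
  have hcentered : iIndepFun (fun j ω ↦ Y j ω - m) μ :=
    hindep.comp (fun _ x ↦ x - m) fun _ ↦ measurable_sub_const m
  have hsum := HasSubgaussianMGF.sum_of_iIndepFun hcentered (s := range n) fun j _ ↦
    hmean j ▸ hasSubgaussianMGF_of_mem_Icc (hmeas j).aemeasurable (ae_of_all _ (hrange j))
  refine (hsum.measureReal_abs_ge_le hε).trans_eq ?_
  rw [sum_const, card_range, nsmul_eq_mul]
  push_cast
  rw [norm_eq_abs, div_pow, sq_abs]
  congr 2
  field_simp

lemma measure_abs_empiricalMean_sub_ge_le (hmeas : ∀ j, Measurable (Y j))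
    (hindep : iIndepFun Y μ) (hrange : ∀ j ω, Y j ω ∈ Set.Icc a b) (hmean : ∀ j, μ[Y j] = m)
    {s : ℕ} (hs : 0 < s) {ε : ℝ} (hε : 0 ≤ ε) :
    μ {ω | ε ≤ |(1 / s : ℝ) * ∑ j ∈ range s, Y j ω - m|} ≤
      ENNReal.ofReal (2 * exp (-2 * s * ε ^ 2 / (b - a) ^ 2)) := by
  have hs' : (0 : ℝ) < s := Nat.cast_pos.2 hs
  have hevent : {ω | ε ≤ |(1 / s : ℝ) * ∑ j ∈ range s, Y j ω - m|} =
      {ω | s * ε ≤ |∑ j ∈ range s, (Y j ω - m)|} := by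
    ext ω
    have : (1 / s : ℝ) * ∑ j ∈ range s, Y j ω - m = (∑ j ∈ range s, (Y j ω - m)) / s := by
      rw [sum_sub_distrib, sum_const, card_range, nsmul_eq_mul]
      field_simp
    rw [Set.mem_ofPred_eq, Set.mem_ofPred_eq, this, abs_div, Nat.abs_cast, le_div_iff₀ hs',
      mul_comm]
  rw [hevent, ← ofReal_measureReal]
  refine ENNReal.ofReal_le_ofReal ((measureReal_abs_sum_sub_ge_le hmeas hindep hrange hmean s
    (by positivity)).trans_eq ?_)
  congr 2
  field_simp

end Hoeffding

lemma exp_neg_two_mul_sq_sqrt_log {s t : ℝ} (hs : 0 < s) (ht : 1 ≤ t) :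
    exp (-2 * s * √(3 * log t / (2 * s)) ^ 2) = (t ^ 3)⁻¹ := by
  rw [sq_sqrt (by have := log_nonneg ht; positivity),
    show -2 * s * (3 * log t / (2 * s)) = -(3 * log t) by field_simp,
    exp_neg, show 3 * log t = (3 : ℕ) * log t by norm_num, exp_nat_mul, exp_log (by positivity)]

theorem stmt4_general {Ω : Type*} [MeasurableSpace Ω] (P : Measure Ω) [IsProbabilityMeasure P]
    (k : ℕ)
    (X : Fin k → ℕ → Ω → ℝ) (μ : Fin k → ℝ)
    (hmeas : ∀ i j, Measurable (X i j))
    (hrange : ∀ i j ω, X i j ω ∈ Set.Icc (0 : ℝ) 1)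
    (hindep : ∀ i, iIndepFun (X i) P)
    (hmean : ∀ i j, ∫ ω, X i j ω ∂P = μ i)
    (t : ℕ) :
    P {ω | ∃ i : Fin k, ∃ s : ℕ, 1 ≤ s ∧ s ≤ t - 1 ∧
        Real.sqrt (3 * Real.log t / (2 * s)) ≤
          |(1 / s : ℝ) * ∑ j ∈ Finset.range s, X i j ω - μ i|}
      ≤ ENNReal.ofReal (2 * k / t ^ 2) := by
  set E : Fin k → ℕ → Set Ω := fun i s ↦
    {ω | √(3 * log t / (2 * s)) ≤ |(1 / s : ℝ) * ∑ j ∈ range s, X i j ω - μ i|}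
  have hE : ∀ i, ∀ s ∈ Icc 1 (t - 1), P (E i s) ≤ ENNReal.ofReal (2 / t ^ 3) := by
    intro i s hs
    obtain ⟨hs1, hst⟩ := mem_Icc.1 hs
    have ht : (1 : ℝ) ≤ t := by exact_mod_cast (show 1 ≤ t by omega)
    refine (measure_abs_empiricalMean_sub_ge_le (hmeas i) (hindep i) (hrange i) (hmean i) hs1
      (sqrt_nonneg _)).trans_eq ?_
    rw [sub_zero, one_pow, div_one, exp_neg_two_mul_sq_sqrt_log (by positivity) ht, div_eq_mul_inv]
  have hcount : (k : ℝ) * (t - 1 : ℕ) * (2 / t ^ 3) ≤ 2 * k / t ^ 2 := by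
    rcases Nat.eq_zero_or_pos t with rfl | ht
    · simp
    calc (k : ℝ) * (t - 1 : ℕ) * (2 / t ^ 3) ≤ k * t * (2 / t ^ 3) := by
          gcongr; exact_mod_cast Nat.sub_le t 1
      _ = 2 * k / (t : ℝ) ^ 2 := by field_simp
  calc P {ω | ∃ i : Fin k, ∃ s : ℕ, 1 ≤ s ∧ s ≤ t - 1 ∧
        √(3 * log t / (2 * s)) ≤ |(1 / s : ℝ) * ∑ j ∈ range s, X i j ω - μ i|}
      ≤ P (⋃ i, ⋃ s ∈ Icc 1 (t - 1), E i s) :=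
        measure_mono fun _ ⟨i, s, hs1, hst, hω⟩ ↦
          Set.mem_iUnion.2 ⟨i, Set.mem_iUnion₂.2 ⟨s, mem_Icc.2 ⟨hs1, hst⟩, hω⟩⟩
    _ ≤ ∑ i, ∑ s ∈ Icc 1 (t - 1), P (E i s) :=
        (measure_iUnion_fintype_le _ _).trans (sum_le_sum fun _ _ ↦ measure_biUnion_finset_le _ _)
    _ ≤ ∑ _i : Fin k, ∑ _s ∈ Icc 1 (t - 1), ENNReal.ofReal (2 / t ^ 3) :=
        sum_le_sum fun i _ ↦ sum_le_sum (hE i)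
    _ = ENNReal.ofReal (k * (t - 1 : ℕ) * (2 / t ^ 3)) := by
        simp [ENNReal.ofReal_mul, mul_assoc]
    _ ≤ ENNReal.ofReal (2 * k / t ^ 2) := ENNReal.ofReal_le_ofReal hcount

/-- **Lemma (nice run).** For `k` arms with i.i.d. samples `X i j ∈ [0,1]` of mean `μ i`,
the probability that some empirical mean (over any number `s ∈ {1,…,t−1}` of samples)
deviates from `μ i` by at least `√(3 ln t / (2 s))` is at most `2k/t²`. -/
theorem stmt4 {Ω : Type*} [MeasurableSpace Ω] (P : Measure Ω) [IsProbabilityMeasure P]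
    (k : ℕ) (hk : 1 ≤ k)
    (X : Fin k → ℕ → Ω → ℝ) (μ : Fin k → ℝ)
    (hmeas : ∀ i j, Measurable (X i j))
    (hrange : ∀ i j ω, X i j ω ∈ Set.Icc (0 : ℝ) 1)
    (hindep : ∀ i, iIndepFun (X i) P)
    (hident : ∀ i j j', IdentDistrib (X i j) (X i j') P P)
    (hmean : ∀ i j, ∫ ω, X i j ω ∂P = μ i)
    (t : ℕ) (ht : 2 ≤ t) :
    P {ω | ∃ i : Fin k, ∃ s : ℕ, 1 ≤ s ∧ s ≤ t - 1 ∧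
        Real.sqrt (3 * Real.log t / (2 * s)) ≤
          |(1 / s : ℝ) * ∑ j ∈ Finset.range s, X i j ω - μ i|}
      ≤ ENNReal.ofReal (2 * k / t ^ 2) :=
  stmt4_general P k X μ hmeas hrange hindep hmean t
end
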